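/- Let γ > 0 and let k : [0,∞) → ℝ be continuously differentiable with k(0) = γ, k'(x) > 0 for all x ≥ 0, and k(x) → +∞ as x → +∞. Define Ψ'(x) = k(x)(e^{γx} − 1), let Φ' : [0,∞) → [0,∞) be the inverse function of Ψ', set Φ(x) = ∫₀ˣ Φ'(u) du, set Φ₀(x) = (x/γ + 1) ln(x/γ + 1) − x/γ, and set Λ = Φ₀ − Φ. Then Λ(x)/x → +∞ as x → +∞. -/

import Mathlib

/-!
Since `Φ₀'(u) = log (u/γ + 1) / γ`, we have `Λ(x) - Λ(0) = ∫₀ˣ (Φ₀' - Φ')`. Writing `u = Ψ'(x)`,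
i.e. `x = Φ'(u)`, one gets `γ (Φ₀'(u) - Φ'(u)) = log (k(x)/γ · (1 - e^{-γx}) + e^{-γx})`, which
tends to `+∞` because `Φ'(u) → ∞` and `k(x) → ∞`. A function whose derivative tends to `+∞`
grows superlinearly.
-/

open Set Filter MeasureTheory Topology

theorem MonotoneOn.tendsto_atTop_of_rightInvOn {α β : Type*} [LinearOrder α] [LinearOrder β]
    [NoMaxOrder β] {f : α → β} {g : β → α} {a : α} {b : β} (hf : MonotoneOn f (Ici a))
    (hg : MapsTo g (Ici b) (Ici a)) (hfg : RightInvOn g f (Ici b)) : Tendsto g atTop atTop := by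
  refine tendsto_atTop.2 fun A => ?_
  filter_upwards [eventually_ge_atTop b, eventually_gt_atTop (f (max A a))] with u hub hu
  by_contra! hgu
  have hle : f (g u) ≤ f (max A a) :=
    hf (hg hub) (le_max_right A a) (hgu.le.trans (le_max_left A a))
  rw [hfg hub] at hle
  exact hle.not_gt hu

theorem tendsto_div_atTop_of_forall_exists_add_mul_sub_le {F : ℝ → ℝ}
    (h : ∀ M, ∃ U, ∀ x ≥ U, F U + M * (x - U) ≤ F x) :
    Tendsto (fun x => F x / x) atTop atTop := by
  refine tendsto_atTop.2 fun b => ?_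
  obtain ⟨U, hU⟩ := h (b + 1)
  have hlim : Tendsto (fun x => (b + 1) + (F U - (b + 1) * U) / x) atTop (𝓝 (b + 1)) := by
    simpa using
      tendsto_const_nhds.add ((tendsto_const_nhds (x := F U - (b + 1) * U)).div_atTop tendsto_id)
  filter_upwards [hlim.eventually_const_le (lt_add_one b), eventually_ge_atTop U,
    eventually_gt_atTop 0] with x hb hxU hx0
  calc b ≤ (b + 1) + (F U - (b + 1) * U) / x := hb
    _ = (F U + (b + 1) * (x - U)) / x := by field_simp; ring
    _ ≤ F x / x := by gcongr; exact hU x hxU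

theorem tendsto_div_atTop_of_sub_eq_integral {F g : ℝ → ℝ} {a : ℝ}
    (hg_int : ∀ x ≥ a, IntervalIntegrable g volume a x)
    (hF : ∀ x ≥ a, F x - F a = ∫ u in a..x, g u) (hg : Tendsto g atTop atTop) :
    Tendsto (fun x => F x / x) atTop atTop := by
  refine tendsto_div_atTop_of_forall_exists_add_mul_sub_le fun M => ?_
  obtain ⟨U, hU⟩ := eventually_atTop.1 ((hg.eventually_ge_atTop M).and (eventually_ge_atTop a))
  have haU : a ≤ U := (hU U le_rfl).2
  refine ⟨U, fun x hUx => ?_⟩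
  have hgUx : IntervalIntegrable g volume U x :=
    (hg_int U haU).symm.trans (hg_int x (haU.trans hUx))
  have hF_Ux : F x - F U = ∫ u in U..x, g u := by
    rw [← intervalIntegral.integral_interval_sub_left (hg_int x (haU.trans hUx)) (hg_int U haU),
      ← hF x (haU.trans hUx), ← hF U haU]
    ring
  have hmono := intervalIntegral.integral_mono_on hUx intervalIntegrable_const hgUx
    fun u hu => (hU u hu.1).1
  rw [intervalIntegral.integral_const, smul_eq_mul, ← hF_Ux] at hmono
  linarith

theorem tendsto_log_mul_exp_sub_one_div_add_one_div_sub {γ : ℝ} (hγ : 0 < γ) {k : ℝ → ℝ}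
    (hk : Tendsto k atTop atTop) :
    Tendsto (fun x => Real.log (k x * (Real.exp (γ * x) - 1) / γ + 1) / γ - x) atTop atTop := by
  set B : ℝ → ℝ := fun x => k x / γ * (1 - Real.exp (-(γ * x))) + Real.exp (-(γ * x))
  have hexp : Tendsto (fun x => Real.exp (-(γ * x))) atTop (𝓝 0) :=
    Real.tendsto_exp_neg_atTop_nhds_zero.comp (tendsto_id.const_mul_atTop hγ)
  have hB : Tendsto B atTop atTop :=
    ((hk.atTop_div_const hγ).atTop_mul_pos one_pos (by simpa using hexp.const_sub 1)).atTop_add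
      hexp
  refine ((Real.tendsto_log_atTop.comp hB).atTop_div_const hγ).congr' ?_
  filter_upwards [hB.eventually_gt_atTop 0] with x hBx
  have hsplit : k x * (Real.exp (γ * x) - 1) / γ + 1 = Real.exp (γ * x) * B x := by
    simp only [B, Real.exp_neg]
    field_simp
  rw [Function.comp_apply, hsplit, Real.log_mul (Real.exp_pos _).ne' hBx.ne', Real.log_exp]
  field_simp
  ring

theorem hasDerivAt_div_add_one_mul_log_sub_div {γ x : ℝ} (hx : x / γ + 1 ≠ 0) :
    HasDerivAt (fun y => (y / γ + 1) * Real.log (y / γ + 1) - y / γ)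
      (Real.log (x / γ + 1) / γ) x := by
  have hlin : HasDerivAt (fun y => y / γ + 1) (1 / γ) x :=
    ((hasDerivAt_id x).div_const γ).add_const 1
  refine (((Real.hasDerivAt_mul_log hx).comp x hlin).sub
    ((hasDerivAt_id x).div_const γ)).congr_deriv ?_
  ring

theorem intervalIntegrable_log_div_add_one_div {γ x : ℝ} (hγ : 0 < γ) (hx : 0 ≤ x) :
    IntervalIntegrable (fun u => Real.log (u / γ + 1) / γ) volume 0 x := by
  refine ((ContinuousOn.log (by fun_prop) fun u hu => ?_).div_const γ).intervalIntegrable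
  rw [uIcc_of_le hx] at hu
  have := hu.1
  positivity

theorem integral_log_div_add_one_div {γ x : ℝ} (hγ : 0 < γ) (hx : 0 ≤ x) :
    ∫ u in (0:ℝ)..x, Real.log (u / γ + 1) / γ = (x / γ + 1) * Real.log (x / γ + 1) - x / γ := by
  have hderiv : ∀ u ∈ uIcc 0 x, HasDerivAt
      (fun y => (y / γ + 1) * Real.log (y / γ + 1) - y / γ) (Real.log (u / γ + 1) / γ) u := by
    intro u hu
    rw [uIcc_of_le hx] at hu
    have := hu.1
    exact hasDerivAt_div_add_one_mul_log_sub_div (by positivity)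
  rw [intervalIntegral.integral_eq_sub_of_hasDerivAt hderiv
    (intervalIntegrable_log_div_add_one_div hγ hx)]
  simp

theorem monotoneOn_mul_exp_sub_one {γ : ℝ} (hγ : 0 ≤ γ) {k : ℝ → ℝ} (hk : MonotoneOn k (Ici 0))
    (hk0 : 0 ≤ k 0) : MonotoneOn (fun x => k x * (Real.exp (γ * x) - 1)) (Ici 0) := by
  have hexp : MonotoneOn (fun x => Real.exp (γ * x) - 1) (Ici 0) := fun a _ b _ hab => by
    dsimp only
    gcongr
  refine hk.mul hexp (fun x hx => hk0.trans (hk self_mem_Ici hx hx)) fun x hx => ?_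
  simpa using Real.one_le_exp (mul_nonneg hγ hx)

theorem stmt_9_general (γ : ℝ) (hγ : 0 < γ) (k k' : ℝ → ℝ)
    (hk_deriv : ∀ x ∈ Set.Ici (0:ℝ), HasDerivWithinAt k (k' x) (Set.Ici 0) x)
    (hk_zero : k 0 = γ)
    (hk'_pos : ∀ x : ℝ, 0 ≤ x → 0 < k' x)
    (hk_top : Tendsto k atTop atTop)
    (Ψ' : ℝ → ℝ) (hΨ' : ∀ x : ℝ, Ψ' x = k x * (Real.exp (γ * x) - 1))
    (Φ' : ℝ → ℝ)
    (hΦ'_maps : Set.MapsTo Φ' (Set.Ici 0) (Set.Ici 0))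
    (hΦ'_inv : Set.InvOn Φ' Ψ' (Set.Ici 0) (Set.Ici 0))
    (Φ : ℝ → ℝ) (hΦ : ∀ x : ℝ, Φ x = ∫ u in (0:ℝ)..x, Φ' u)
    (Φ₀ : ℝ → ℝ) (hΦ₀ : ∀ x : ℝ, Φ₀ x = (x / γ + 1) * Real.log (x / γ + 1) - x / γ)
    (Λ : ℝ → ℝ) (hΛ : ∀ x : ℝ, Λ x = Φ₀ x - Φ x) :
    Tendsto (fun x : ℝ => Λ x / x) atTop atTop := by
  have hk_mono : MonotoneOn k (Ici 0) := by
    refine monotoneOn_of_hasDerivWithinAt_nonneg (convex_Ici 0)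
      (fun x hx => (hk_deriv x hx).continuousWithinAt) (fun x hx => ?_)
      (fun x hx => (hk'_pos x (interior_subset hx)).le)
    exact (hk_deriv x (interior_subset hx)).mono interior_subset
  have hΨ'_mono : MonotoneOn Ψ' (Ici 0) :=
    funext hΨ' ▸ monotoneOn_mul_exp_sub_one hγ.le hk_mono (hk_zero ▸ hγ.le)
  have hΦ'_mono : MonotoneOn Φ' (Ici 0) :=
    Function.monotoneOn_of_rightInvOn_of_mapsTo hΨ'_mono hΦ'_inv.2 hΦ'_maps
  have hΦ'_int : ∀ x ≥ (0:ℝ), IntervalIntegrable Φ' volume 0 x := fun x hx =>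
    (hΦ'_mono.mono (by simp [uIcc_of_le hx, Icc_subset_Ici_self])).intervalIntegrable
  have hΛ' : Tendsto (fun u => Real.log (u / γ + 1) / γ - Φ' u) atTop atTop := by
    refine ((tendsto_log_mul_exp_sub_one_div_add_one_div_sub hγ hk_top).comp
      (hΨ'_mono.tendsto_atTop_of_rightInvOn hΦ'_maps hΦ'_inv.2)).congr' ?_
    filter_upwards [eventually_ge_atTop 0] with u hu
    simp only [Function.comp_apply, ← hΨ', hΦ'_inv.2 hu]
  refine tendsto_div_atTop_of_sub_eq_integral (a := 0)
    (fun x hx => (intervalIntegrable_log_div_add_one_div hγ hx).sub (hΦ'_int x hx))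
    (fun x hx => ?_) hΛ'
  rw [intervalIntegral.integral_sub (intervalIntegrable_log_div_add_one_div hγ hx) (hΦ'_int x hx),
    integral_log_div_add_one_div hγ hx, hΛ, hΛ, hΦ₀, hΦ₀, hΦ, hΦ]
  simp

/-- With `γ > 0`, `k` continuously differentiable on `[0,∞)`, `k 0 = γ`, `k' > 0`,
`k x → +∞`, `Ψ' x = k x (e^{γx} - 1)` with inverse `Φ'`, `Φ x = ∫₀ˣ Φ' u du`,
`Φ₀ x = (x/γ + 1) ln (x/γ + 1) - x/γ` and `Λ = Φ₀ - Φ`, one has `Λ x / x → +∞` as `x → +∞`. -/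
theorem stmt_9 (γ : ℝ) (hγ : 0 < γ) (k k' : ℝ → ℝ)
    (hk_deriv : ∀ x ∈ Set.Ici (0:ℝ), HasDerivWithinAt k (k' x) (Set.Ici 0) x)
    (hk'_cont : ContinuousOn k' (Set.Ici 0))
    (hk_zero : k 0 = γ)
    (hk'_pos : ∀ x : ℝ, 0 ≤ x → 0 < k' x)
    (hk_top : Tendsto k atTop atTop)
    (Ψ' : ℝ → ℝ) (hΨ' : ∀ x : ℝ, Ψ' x = k x * (Real.exp (γ * x) - 1))
    (Φ' : ℝ → ℝ)
    (hΦ'_maps : Set.MapsTo Φ' (Set.Ici 0) (Set.Ici 0))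
    (hΦ'_inv : Set.InvOn Φ' Ψ' (Set.Ici 0) (Set.Ici 0))
    (Φ : ℝ → ℝ) (hΦ : ∀ x : ℝ, Φ x = ∫ u in (0:ℝ)..x, Φ' u)
    (Φ₀ : ℝ → ℝ) (hΦ₀ : ∀ x : ℝ, Φ₀ x = (x / γ + 1) * Real.log (x / γ + 1) - x / γ)
    (Λ : ℝ → ℝ) (hΛ : ∀ x : ℝ, Λ x = Φ₀ x - Φ x) :
    Tendsto (fun x : ℝ => Λ x / x) atTop atTop :=
  stmt_9_general γ hγ k k' hk_deriv hk_zero hk'_pos hk_top Ψ' hΨ' Φ' hΦ'_maps hΦ'_inv Φ hΦ Φ₀ hΦ₀ Λ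
    hΛ
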